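/- Let X ⊆ ℝ^d be a discrete set with complex coefficients (b_x)_{x∈X}, let δ > 0 satisfy X ∩ B_δ ⊆ {0}, and suppose there are constants B_X > 0 and P > 0 such that ∑_{x∈X∩B_r} |b_x| ≤ B_X r^P for all r ≥ δ. Let φ : ℝ^d → [0,∞) be a smooth radial function supported in B_1 with ∫φ = 1. Then for any a > 0 with a ≠ P there exists a constant W = W(δ,a,P) > 0 (also depending on φ) such that for all t > 0, ∑_{x∈X\{0}} |b_x · φ̂(tx)| / ‖x‖^a ≤ B_X · W · (1 + t^{a-P}). -/

import Mathlib

open MeasureTheory Filter Metric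
open scoped FourierTransform Real Topology

noncomputable section

/-- The number of points of `X` in the closed ball of radius `r` about the origin. -/
def ballCount {d : ℕ} (X : Set (EuclideanSpace ℝ (Fin d))) (r : ℝ) : ℕ :=
  (X ∩ closedBall 0 r).ncard

/-- The sum `∑_{s ∈ S ∩ B_r} ‖c s‖`. -/
def coeffSum {d : ℕ} (S : Set (EuclideanSpace ℝ (Fin d)))
    (c : EuclideanSpace ℝ (Fin d) → ℂ) (r : ℝ) : ℝ :=
  ∑' s : ↥(S ∩ closedBall 0 r), ‖c s.1‖

/-- `P` is a coefficient growth rate for the Fourier quasicrystal data `(Λ, S, c)`: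
`#(Λ ∩ B_r) + ∑_{s ∈ S ∩ B_r} ‖c s‖ = O(r ^ P)`. -/
def CoeffGrowthRate {d : ℕ} (Λ S : Set (EuclideanSpace ℝ (Fin d)))
    (c : EuclideanSpace ℝ (Fin d) → ℂ) (P : ℝ) : Prop :=
  ∃ C : ℝ, ∀ r ≥ (1 : ℝ), (ballCount Λ r : ℝ) + coeffSum S c r ≤ C * r ^ P

/-- `Λ ⊆ ℝ^d` is a Fourier quasicrystal with spectrum `S` and Fourier coefficients `c`:
both `Λ` and `S` are discrete (locally finite), the Poisson-type summation formula
`∑_{λ ∈ Λ} 𝓕 f (λ) = ∑_{s ∈ S} c s * f s` holds for every Schwartz function `f`,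
and the counting/coefficient data grows polynomially. -/
structure IsFourierQuasicrystal {d : ℕ} (Λ S : Set (EuclideanSpace ℝ (Fin d)))
    (c : EuclideanSpace ℝ (Fin d) → ℂ) : Prop where
  locallyFinite_Λ : ∀ r : ℝ, (Λ ∩ closedBall 0 r).Finite
  locallyFinite_S : ∀ r : ℝ, (S ∩ closedBall 0 r).Finite
  summable_left : ∀ f : SchwartzMap (EuclideanSpace ℝ (Fin d)) ℂ,
    Summable fun l : Λ => 𝓕 ⇑f l.1
  summable_right : ∀ f : SchwartzMap (EuclideanSpace ℝ (Fin d)) ℂ,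
    Summable fun s : S => c s.1 * f s.1
  summation : ∀ f : SchwartzMap (EuclideanSpace ℝ (Fin d)) ℂ,
    ∑' l : Λ, 𝓕 ⇑f l.1 = ∑' s : S, c s.1 * f s.1
  growth : ∃ P > 0, CoeffGrowthRate Λ S c P

/-- A set `X` is uniformly discrete if there is `δ > 0` with `‖x - y‖ ≥ δ`
for all distinct `x, y ∈ X`. -/
def UniformlyDiscrete {d : ℕ} (X : Set (EuclideanSpace ℝ (Fin d))) : Prop :=
  ∃ δ > 0, ∀ x ∈ X, ∀ y ∈ X, x ≠ y → δ ≤ dist x y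

/-!
Since `φ` is smooth with compact support, `φ̂` is a Schwartz function: it is bounded, and
`|φ̂(ξ)| ≲ ‖ξ‖^(-N)` with `N + a > P`. Split `X \ {0}` at `‖x‖ = t⁻¹`, using the first bound
inside and the second outside. On a dyadic annulus `s ≤ ‖x‖ ≤ 2 s` the growth hypothesis bounds
`∑ |b_x| ‖x‖^(-q)` by `B_X 2^P s^(P-q)`, so both pieces are geometric series and contribute
`O(B_X t^(a-P))`. When `a > P` the whole series `∑ |b_x| ‖x‖^(-a)` over `‖x‖ > δ` already
converges, which gives the constant term.
-/

open scoped ContDiff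

section Dyadic

variable {E : Type*} [SeminormedAddCommGroup E]

/-- The growth hypothesis, summed in `ℝ≥0∞` so that it also asserts summability. -/
def CoeffSumGrowth (Y : Set E) (b : E → ℂ) (B P : ℝ) : Prop :=
  ∀ r > 0, ∑' x : ↥(Y ∩ closedBall 0 r), ENNReal.ofReal ‖b x.1‖ ≤ ENNReal.ofReal (B * r ^ P)

lemma ENNReal.tsum_ofReal_le_ofReal_mul_tsum {ι : Type*} {f g : ι → ℝ} {c : ℝ} (hc : 0 ≤ c)
    (h : ∀ i, f i ≤ c * g i) :
    ∑' i, ENNReal.ofReal (f i) ≤ ENNReal.ofReal c * ∑' i, ENNReal.ofReal (g i) := by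
  rw [← ENNReal.tsum_mul_left]
  exact ENNReal.tsum_le_tsum fun i => (ENNReal.ofReal_le_ofReal (h i)).trans_eq
    (ENNReal.ofReal_mul hc)

lemma ENNReal.tsum_ofReal_mul_geometric_le (c : ℝ) {ρ : ℝ} (hρ₀ : 0 ≤ ρ) (hρ₁ : ρ < 1) :
    ∑' k : ℕ, ENNReal.ofReal (c * ρ ^ k) ≤ ENNReal.ofReal (c * (1 - ρ)⁻¹) := by
  rcases le_or_gt c 0 with hc | hc
  · simp [ENNReal.ofReal_eq_zero.2 (mul_nonpos_of_nonpos_of_nonneg hc (pow_nonneg hρ₀ _))]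
  · rw [← ENNReal.ofReal_tsum_of_nonneg (fun k => by positivity)
      ((summable_geometric_of_lt_one hρ₀ hρ₁).mul_left c), tsum_mul_left,
      tsum_geometric_of_lt_one hρ₀ hρ₁]

lemma coeffSumGrowth_diff_singleton_zero {X : Set E} {b : E → ℂ} {δ B P : ℝ}
    (hX : ∀ r : ℝ, (X ∩ closedBall 0 r).Finite) (hXδ : X ∩ closedBall 0 δ ⊆ {0})
    (hgrowth : ∀ r ≥ δ, (∑' x : ↥(X ∩ closedBall 0 r), ‖b x.1‖) ≤ B * r ^ P) :
    CoeffSumGrowth (X \ {0}) b B P := by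
  rintro r -
  rcases le_or_gt δ r with hδr | hrδ
  · have : Finite ↥(X ∩ closedBall 0 r) := (hX r).to_subtype
    calc ∑' x : ↥((X \ {0}) ∩ closedBall 0 r), ENNReal.ofReal ‖b x.1‖
        ≤ ∑' x : ↥(X ∩ closedBall 0 r), ENNReal.ofReal ‖b x.1‖ :=
          ENNReal.tsum_mono_subtype (fun x => ENNReal.ofReal ‖b x‖)
            (Set.inter_subset_inter_left _ Set.sdiff_subset)
      _ = ENNReal.ofReal (∑' x : ↥(X ∩ closedBall 0 r), ‖b x.1‖) :=
          (ENNReal.ofReal_tsum_of_nonneg (fun _ => norm_nonneg _) .of_finite).symm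
      _ ≤ ENNReal.ofReal (B * r ^ P) := ENNReal.ofReal_le_ofReal (hgrowth r hδr)
  · have hempty : (X \ {0}) ∩ closedBall 0 r = ∅ := by
      refine Set.eq_empty_of_forall_notMem fun x ⟨⟨hxX, hx0⟩, hxr⟩ => hx0 (hXδ ⟨hxX, ?_⟩)
      exact closedBall_subset_closedBall hrδ.le hxr
    simp [hempty]

variable {Y : Set E} {b : E → ℂ} {B P q : ℝ}

lemma CoeffSumGrowth.tsum_annulus_le (hY : CoeffSumGrowth Y b B P) {s : ℝ} (hs : 0 < s)
    (hq : 0 ≤ q) :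
    ∑' x : ↥{x ∈ Y | s ≤ ‖x‖ ∧ ‖x‖ ≤ 2 * s}, ENNReal.ofReal (‖b x.1‖ * ‖x.1‖ ^ (-q)) ≤
      ENNReal.ofReal (B * 2 ^ P * s ^ (P - q)) := by
  have hsub : {x ∈ Y | s ≤ ‖x‖ ∧ ‖x‖ ≤ 2 * s} ⊆ Y ∩ closedBall 0 (2 * s) :=
    fun x ⟨hxY, _, hx⟩ => ⟨hxY, mem_closedBall_zero_iff.2 hx⟩
  calc ∑' x : ↥{x ∈ Y | s ≤ ‖x‖ ∧ ‖x‖ ≤ 2 * s}, ENNReal.ofReal (‖b x.1‖ * ‖x.1‖ ^ (-q))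
      ≤ ENNReal.ofReal (s ^ (-q)) *
          ∑' x : ↥{x ∈ Y | s ≤ ‖x‖ ∧ ‖x‖ ≤ 2 * s}, ENNReal.ofReal ‖b x.1‖ :=
        ENNReal.tsum_ofReal_le_ofReal_mul_tsum (by positivity) fun x => by
          rw [mul_comm]
          exact mul_le_mul_of_nonneg_right
            (Real.rpow_le_rpow_of_nonpos hs x.2.2.1 (neg_nonpos.2 hq)) (norm_nonneg _)
    _ ≤ ENNReal.ofReal (s ^ (-q)) * ENNReal.ofReal (B * (2 * s) ^ P) := by
        gcongr
        exact (ENNReal.tsum_mono_subtype (fun x => ENNReal.ofReal ‖b x‖) hsub).trans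
          (hY (2 * s) (by positivity))
    _ = ENNReal.ofReal (B * 2 ^ P * s ^ (P - q)) := by
        rw [← ENNReal.ofReal_mul (by positivity), Real.mul_rpow zero_le_two hs.le, sub_eq_add_neg,
          Real.rpow_add hs]
        ring_nf

lemma CoeffSumGrowth.tsum_le_of_subset_iUnion_annuli (hY : CoeffSumGrowth Y b B P)
    (hq : 0 ≤ q) {S : Set E} {s₀ θ : ℝ} (hs₀ : 0 < s₀) (hθ : 0 < θ) (hθq : θ ^ (P - q) < 1)
    (hS : S ⊆ ⋃ k : ℕ, {x ∈ Y | s₀ * θ ^ k ≤ ‖x‖ ∧ ‖x‖ ≤ 2 * (s₀ * θ ^ k)}) :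
    ∑' x : ↥S, ENNReal.ofReal (‖b x.1‖ * ‖x.1‖ ^ (-q)) ≤
      ENNReal.ofReal (B * 2 ^ P * s₀ ^ (P - q) * (1 - θ ^ (P - q))⁻¹) := by
  set f : E → ENNReal := fun x => ENNReal.ofReal (‖b x‖ * ‖x‖ ^ (-q))
  calc ∑' x : ↥S, f x
      ≤ ∑' k : ℕ, ∑' x : ↥{x ∈ Y | s₀ * θ ^ k ≤ ‖x‖ ∧ ‖x‖ ≤ 2 * (s₀ * θ ^ k)}, f x :=
        (ENNReal.tsum_mono_subtype f hS).trans (ENNReal.tsum_iUnion_le_tsum f _)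
    _ ≤ ∑' k : ℕ, ENNReal.ofReal (B * 2 ^ P * s₀ ^ (P - q) * (θ ^ (P - q)) ^ k) := by
        refine ENNReal.tsum_le_tsum fun k =>
          (hY.tsum_annulus_le (s := s₀ * θ ^ k) (by positivity) hq).trans_eq ?_
        rw [Real.mul_rpow hs₀.le (by positivity), ← Real.rpow_pow_comm hθ.le]
        ring_nf
    _ ≤ _ := ENNReal.tsum_ofReal_mul_geometric_le _ (by positivity) hθq

lemma CoeffSumGrowth.exists_tsum_tail_le (hY : CoeffSumGrowth Y b B P) (hq : 0 ≤ q)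
    (hPq : P < q) :
    ∃ C > 0, ∀ R > 0, ∑' x : ↥{x ∈ Y | R ≤ ‖x‖}, ENNReal.ofReal (‖b x.1‖ * ‖x.1‖ ^ (-q)) ≤
      ENNReal.ofReal (B * C * R ^ (P - q)) := by
  have hθq : (2 : ℝ) ^ (P - q) < 1 := Real.rpow_lt_one_of_one_lt_of_neg one_lt_two (by linarith)
  refine ⟨2 ^ P * (1 - 2 ^ (P - q))⁻¹, by have := sub_pos.2 hθq; positivity, fun R hR => ?_⟩
  have hcover : {x ∈ Y | R ≤ ‖x‖} ⊆
      ⋃ k : ℕ, {x ∈ Y | R * 2 ^ k ≤ ‖x‖ ∧ ‖x‖ ≤ 2 * (R * 2 ^ k)} := by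
    rintro x ⟨hxY, hRx⟩
    obtain ⟨n, hn, hn'⟩ := exists_nat_pow_near ((one_le_div hR).2 hRx) one_lt_two
    rw [le_div_iff₀ hR] at hn
    rw [div_lt_iff₀ hR] at hn'
    exact Set.mem_iUnion.2 ⟨n, hxY, by linarith, by rw [pow_succ] at hn'; linarith⟩
  refine (hY.tsum_le_of_subset_iUnion_annuli hq hR two_pos hθq hcover).trans_eq ?_
  ring_nf

lemma CoeffSumGrowth.exists_tsum_head_le (hY : CoeffSumGrowth Y b B P)
    (hY₀ : ∀ x ∈ Y, 0 < ‖x‖) (hq : 0 ≤ q) (hqP : q < P) :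
    ∃ C > 0, ∀ R > 0, ∑' x : ↥{x ∈ Y | ‖x‖ ≤ R}, ENNReal.ofReal (‖b x.1‖ * ‖x.1‖ ^ (-q)) ≤
      ENNReal.ofReal (B * C * R ^ (P - q)) := by
  have hθq : (2⁻¹ : ℝ) ^ (P - q) < 1 := Real.rpow_lt_one (by norm_num) (by norm_num) (by linarith)
  refine ⟨2 ^ P * 2⁻¹ ^ (P - q) * (1 - 2⁻¹ ^ (P - q))⁻¹, by have := sub_pos.2 hθq; positivity,
    fun R hR => ?_⟩
  have hcover : {x ∈ Y | ‖x‖ ≤ R} ⊆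
      ⋃ k : ℕ, {x ∈ Y | R * 2⁻¹ * 2⁻¹ ^ k ≤ ‖x‖ ∧ ‖x‖ ≤ 2 * (R * 2⁻¹ * 2⁻¹ ^ k)} := by
    rintro x ⟨hxY, hxR⟩
    have hx := hY₀ x hxY
    obtain ⟨n, hn, hn'⟩ := exists_nat_pow_near ((one_le_div hx).2 hxR) one_lt_two
    rw [le_div_iff₀ hx] at hn
    rw [div_lt_iff₀ hx, pow_succ] at hn'
    refine Set.mem_iUnion.2 ⟨n, hxY, ?_, ?_⟩
    · rw [inv_pow]
      field_simp
      linarith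
    · rw [inv_pow]
      field_simp
      linarith
  refine (hY.tsum_le_of_subset_iUnion_annuli hq (by positivity) (by norm_num) hθq
    hcover).trans_eq ?_
  rw [Real.mul_rpow hR.le (by norm_num)]
  ring_nf

end Dyadic

lemma norm_mul_div_rpow_le {z w : ℂ} {C r : ℝ} (hw : ‖w‖ ≤ C) (hr : 0 ≤ r) (a : ℝ) :
    ‖z * w‖ / r ^ a ≤ C * (‖z‖ * r ^ (-a)) := by
  rw [norm_mul, div_eq_mul_inv, ← Real.rpow_neg hr]
  calc ‖z‖ * ‖w‖ * r ^ (-a) ≤ ‖z‖ * C * r ^ (-a) := by gcongr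
    _ = C * (‖z‖ * r ^ (-a)) := by ring

section Rescaled

variable {E : Type*} [SeminormedAddCommGroup E] [NormedSpace ℝ E]
  {Y : Set E} {b : E → ℂ} {B P : ℝ} {g : E → ℂ} {C N a : ℝ}

lemma norm_mul_apply_smul_div_rpow_le (hgN : ∀ ξ, ‖ξ‖ ^ N * ‖g ξ‖ ≤ C) (z : ℂ) {t : ℝ}
    (ht : 0 < t) {x : E} (hx : 0 < ‖x‖) (a : ℝ) :
    ‖z * g (t • x)‖ / ‖x‖ ^ a ≤ C * t ^ (-N) * (‖z‖ * ‖x‖ ^ (-(N + a))) := by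
  have htx : ‖t • x‖ = t * ‖x‖ := by rw [norm_smul, Real.norm_of_nonneg ht.le]
  have hgx : ‖g (t • x)‖ ≤ C * (t * ‖x‖) ^ (-N) := by
    rw [← htx, Real.rpow_neg (norm_nonneg _), ← div_eq_mul_inv,
      le_div_iff₀' (by rw [htx]; positivity)]
    exact hgN (t • x)
  calc ‖z * g (t • x)‖ / ‖x‖ ^ a ≤ C * (t * ‖x‖) ^ (-N) * (‖z‖ * ‖x‖ ^ (-a)) :=
        norm_mul_div_rpow_le hgx hx.le a
    _ = C * t ^ (-N) * (‖z‖ * ‖x‖ ^ (-(N + a))) := by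
        rw [Real.mul_rpow ht.le hx.le, neg_add, Real.rpow_add hx]
        ring

lemma CoeffSumGrowth.exists_tsum_inner_le (hY : CoeffSumGrowth Y b B P)
    (hY₀ : ∀ x ∈ Y, 0 < ‖x‖) (hC : 0 < C) (hg : ∀ ξ, ‖g ξ‖ ≤ C) (ha : 0 ≤ a) (haP : a < P) :
    ∃ W > 0, ∀ t > 0, ∑' x : ↥{x ∈ Y | ‖x‖ ≤ t⁻¹},
      ENNReal.ofReal (‖b x.1 * g (t • x.1)‖ / ‖x.1‖ ^ a) ≤
        ENNReal.ofReal (B * W * t ^ (a - P)) := by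
  obtain ⟨C₁, hC₁, hhead⟩ := hY.exists_tsum_head_le hY₀ ha haP
  refine ⟨C * C₁, by positivity, fun t ht => ?_⟩
  calc ∑' x : ↥{x ∈ Y | ‖x‖ ≤ t⁻¹}, ENNReal.ofReal (‖b x.1 * g (t • x.1)‖ / ‖x.1‖ ^ a)
      ≤ ENNReal.ofReal C *
          ∑' x : ↥{x ∈ Y | ‖x‖ ≤ t⁻¹}, ENNReal.ofReal (‖b x.1‖ * ‖x.1‖ ^ (-a)) :=
        ENNReal.tsum_ofReal_le_ofReal_mul_tsum hC.le fun x =>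
          norm_mul_div_rpow_le (hg _) (norm_nonneg _) a
    _ ≤ ENNReal.ofReal C * ENNReal.ofReal (B * C₁ * t⁻¹ ^ (P - a)) := by
        gcongr
        exact hhead _ (inv_pos.2 ht)
    _ = ENNReal.ofReal (B * (C * C₁) * t ^ (a - P)) := by
        rw [← ENNReal.ofReal_mul hC.le, Real.inv_rpow ht.le, ← Real.rpow_neg ht.le, neg_sub]
        ring_nf

lemma CoeffSumGrowth.exists_tsum_outer_le (hY : CoeffSumGrowth Y b B P)
    (hY₀ : ∀ x ∈ Y, 0 < ‖x‖) (hC : 0 < C) (hgN : ∀ ξ, ‖ξ‖ ^ N * ‖g ξ‖ ≤ C)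
    (ha : 0 ≤ a) (haP : a < P) (hNa : P < N + a) :
    ∃ W > 0, ∀ t > 0, ∑' x : ↥{x ∈ Y | t⁻¹ ≤ ‖x‖},
      ENNReal.ofReal (‖b x.1 * g (t • x.1)‖ / ‖x.1‖ ^ a) ≤
        ENNReal.ofReal (B * W * t ^ (a - P)) := by
  obtain ⟨C₂, hC₂, htail⟩ := hY.exists_tsum_tail_le (q := N + a) (by linarith) hNa
  refine ⟨C * C₂, by positivity, fun t ht => ?_⟩
  have hpow : t ^ (-N) * t⁻¹ ^ (P - (N + a)) = t ^ (a - P) := by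
    rw [Real.inv_rpow ht.le, ← Real.rpow_neg ht.le, ← Real.rpow_add ht]
    ring_nf
  calc ∑' x : ↥{x ∈ Y | t⁻¹ ≤ ‖x‖}, ENNReal.ofReal (‖b x.1 * g (t • x.1)‖ / ‖x.1‖ ^ a)
      ≤ ENNReal.ofReal (C * t ^ (-N)) *
          ∑' x : ↥{x ∈ Y | t⁻¹ ≤ ‖x‖}, ENNReal.ofReal (‖b x.1‖ * ‖x.1‖ ^ (-(N + a))) :=
        ENNReal.tsum_ofReal_le_ofReal_mul_tsum (by positivity) fun x =>
          norm_mul_apply_smul_div_rpow_le hgN _ ht (hY₀ x x.2.1) a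
    _ ≤ ENNReal.ofReal (C * t ^ (-N)) * ENNReal.ofReal (B * C₂ * t⁻¹ ^ (P - (N + a))) := by
        gcongr
        exact htail _ (inv_pos.2 ht)
    _ = ENNReal.ofReal (B * (C * C₂) * t ^ (a - P)) := by
        rw [← ENNReal.ofReal_mul (by positivity)]
        congr 1
        linear_combination B * C * C₂ * hpow

lemma CoeffSumGrowth.exists_tsum_le_mul_rpow_of_lt (hY : CoeffSumGrowth Y b B P) (hB : 0 ≤ B)
    (hY₀ : ∀ x ∈ Y, 0 < ‖x‖) (hC : 0 < C) (hg : ∀ ξ, ‖g ξ‖ ≤ C)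
    (hgN : ∀ ξ, ‖ξ‖ ^ N * ‖g ξ‖ ≤ C) (hNa : P < N + a) (ha : 0 ≤ a) (haP : a < P) :
    ∃ W > 0, ∀ t > 0, ∑' x : ↥Y, ENNReal.ofReal (‖b x.1 * g (t • x.1)‖ / ‖x.1‖ ^ a) ≤
      ENNReal.ofReal (B * W * t ^ (a - P)) := by
  obtain ⟨W₁, hW₁, hinner⟩ := hY.exists_tsum_inner_le hY₀ hC hg ha haP
  obtain ⟨W₂, hW₂, houter⟩ := hY.exists_tsum_outer_le hY₀ hC hgN ha haP hNa
  refine ⟨W₁ + W₂, by positivity, fun t ht => ?_⟩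
  set F : E → ENNReal := fun x => ENNReal.ofReal (‖b x * g (t • x)‖ / ‖x‖ ^ a)
  have hsplit : Y ⊆ {x ∈ Y | ‖x‖ ≤ t⁻¹} ∪ {x ∈ Y | t⁻¹ ≤ ‖x‖} :=
    fun x hx => (le_total ‖x‖ t⁻¹).elim (fun h => Or.inl ⟨hx, h⟩) (fun h => Or.inr ⟨hx, h⟩)
  calc ∑' x : ↥Y, F x
      ≤ ∑' x : ↥{x ∈ Y | ‖x‖ ≤ t⁻¹}, F x + ∑' x : ↥{x ∈ Y | t⁻¹ ≤ ‖x‖}, F x :=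
        (ENNReal.tsum_mono_subtype F hsplit).trans (ENNReal.tsum_union_le F _ _)
    _ ≤ ENNReal.ofReal (B * W₁ * t ^ (a - P)) + ENNReal.ofReal (B * W₂ * t ^ (a - P)) :=
        add_le_add (hinner t ht) (houter t ht)
    _ = ENNReal.ofReal (B * (W₁ + W₂) * t ^ (a - P)) := by
        rw [← ENNReal.ofReal_add (by positivity) (by positivity)]
        ring_nf

lemma CoeffSumGrowth.exists_tsum_le_mul_of_gt (hY : CoeffSumGrowth Y b B P) {δ : ℝ} (hδ : 0 < δ)
    (hYδ : ∀ x ∈ Y, δ ≤ ‖x‖) (hC : 0 < C) (hg : ∀ ξ, ‖g ξ‖ ≤ C) (ha : 0 ≤ a) (hPa : P < a) :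
    ∃ W > 0, ∀ t : ℝ, ∑' x : ↥Y, ENNReal.ofReal (‖b x.1 * g (t • x.1)‖ / ‖x.1‖ ^ a) ≤
      ENNReal.ofReal (B * W) := by
  obtain ⟨C₁, hC₁, htail⟩ := hY.exists_tsum_tail_le ha hPa
  refine ⟨C * C₁ * δ ^ (P - a), by positivity, fun t => ?_⟩
  have hsub : Y ⊆ {x ∈ Y | δ ≤ ‖x‖} := fun x hx => ⟨hx, hYδ x hx⟩
  calc ∑' x : ↥Y, ENNReal.ofReal (‖b x.1 * g (t • x.1)‖ / ‖x.1‖ ^ a)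
      ≤ ENNReal.ofReal C * ∑' x : ↥Y, ENNReal.ofReal (‖b x.1‖ * ‖x.1‖ ^ (-a)) :=
        ENNReal.tsum_ofReal_le_ofReal_mul_tsum hC.le fun x =>
          norm_mul_div_rpow_le (hg _) (norm_nonneg _) a
    _ ≤ ENNReal.ofReal C * ENNReal.ofReal (B * C₁ * δ ^ (P - a)) := by
        gcongr
        exact (ENNReal.tsum_mono_subtype (fun x => ENNReal.ofReal (‖b x‖ * ‖x‖ ^ (-a))) hsub).trans
          (htail δ hδ)
    _ = ENNReal.ofReal (B * (C * C₁ * δ ^ (P - a))) := by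
        rw [← ENNReal.ofReal_mul hC.le]
        ring_nf

theorem CoeffSumGrowth.exists_tsum_le_mul_one_add_rpow (hY : CoeffSumGrowth Y b B P)
    (hB : 0 ≤ B) {δ : ℝ} (hδ : 0 < δ) (hYδ : ∀ x ∈ Y, δ ≤ ‖x‖) (hC : 0 < C)
    (hg : ∀ ξ, ‖g ξ‖ ≤ C) (hgN : ∀ ξ, ‖ξ‖ ^ N * ‖g ξ‖ ≤ C) (hNa : P < N + a) (ha : 0 ≤ a)
    (haP : a ≠ P) :
    ∃ W > 0, ∀ t > 0, ∑' x : ↥Y, ENNReal.ofReal (‖b x.1 * g (t • x.1)‖ / ‖x.1‖ ^ a) ≤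
      ENNReal.ofReal (B * W * (1 + t ^ (a - P))) := by
  rcases haP.lt_or_gt with haP | hPa
  · obtain ⟨W, hW, hbound⟩ := hY.exists_tsum_le_mul_rpow_of_lt hB
      (fun x hx => hδ.trans_le (hYδ x hx)) hC hg hgN hNa ha haP
    refine ⟨W, hW, fun t ht => (hbound t ht).trans (ENNReal.ofReal_le_ofReal ?_)⟩
    nlinarith [mul_nonneg hB hW.le]
  · obtain ⟨W, hW, hbound⟩ := hY.exists_tsum_le_mul_of_gt hδ hYδ hC hg ha hPa
    refine ⟨W, hW, fun t ht => (hbound t).trans (ENNReal.ofReal_le_ofReal ?_)⟩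
    nlinarith [mul_nonneg hB hW.le, Real.rpow_nonneg ht.le (a - P)]

end Rescaled

lemma exists_norm_fourier_le_of_hasCompactSupport {V : Type*} [NormedAddCommGroup V]
    [InnerProductSpace ℝ V] [FiniteDimensional ℝ V] [MeasurableSpace V] [BorelSpace V]
    {φ : V → ℂ} (hc : HasCompactSupport φ) (hs : ContDiff ℝ ∞ φ) (k : ℕ) :
    ∃ C > 0, ∀ ξ, ‖𝓕 φ ξ‖ ≤ C ∧ ‖ξ‖ ^ k * ‖𝓕 φ ξ‖ ≤ C := by
  set f := 𝓕 (hc.toSchwartzMap hs)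
  obtain ⟨C₀, hC₀, h₀⟩ := f.decay 0 0
  obtain ⟨C, -, h⟩ := f.decay k 0
  simp only [norm_iteratedFDeriv_zero, pow_zero, one_mul] at h₀ h
  exact ⟨max C₀ C, lt_max_of_lt_left hC₀,
    fun ξ => ⟨(h₀ ξ).trans (le_max_left _ _), (h ξ).trans (le_max_right _ _)⟩⟩

theorem mollified_coefficient_sum_bound_general
    (d : ℕ) (X : Set (EuclideanSpace ℝ (Fin d))) (b : EuclideanSpace ℝ (Fin d) → ℂ)
    (hX : ∀ r : ℝ, (X ∩ closedBall 0 r).Finite)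
    (δ : ℝ) (hδ : 0 < δ) (hXδ : X ∩ closedBall 0 δ ⊆ {0})
    (BX P : ℝ) (hBX : 0 < BX)
    (hgrowth : ∀ r ≥ δ, (∑' x : ↥(X ∩ closedBall 0 r), ‖b x.1‖) ≤ BX * r ^ P)
    (φ : EuclideanSpace ℝ (Fin d) → ℝ)
    (hφ_smooth : ContDiff ℝ (⊤ : ℕ∞) φ)
    (hφ_supp : Function.support φ ⊆ closedBall 0 1)
    (a : ℝ) (ha : 0 < a) (haP : a ≠ P) :
    ∃ W > 0, ∀ t > (0 : ℝ),
      ∑' x : ↥(X \ {0}),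
          ENNReal.ofReal (‖b x.1 * 𝓕 (fun y => (φ y : ℂ)) (t • x.1)‖ / ‖x.1‖ ^ a)
        ≤ ENNReal.ofReal (BX * W * (1 + t ^ (a - P))) := by
  have hc : HasCompactSupport fun y => (φ y : ℂ) :=
    (HasCompactSupport.of_support_subset_isCompact (isCompact_closedBall 0 1) hφ_supp).comp_left
      Complex.ofReal_zero
  obtain ⟨C, hC, hbound⟩ := exists_norm_fourier_le_of_hasCompactSupport hc
    (Complex.ofRealCLM.contDiff.comp hφ_smooth) ⌈P⌉₊
  have hXδ' : ∀ x ∈ X \ {0}, δ ≤ ‖x‖ := fun x ⟨hxX, hx0⟩ =>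
    (not_le.1 fun hxδ => hx0 (hXδ ⟨hxX, mem_closedBall_zero_iff.2 hxδ⟩)).le
  exact (coeffSumGrowth_diff_singleton_zero hX hXδ hgrowth).exists_tsum_le_mul_one_add_rpow
    (N := ⌈P⌉₊) hBX.le hδ hXδ' hC (fun ξ => (hbound ξ).1)
    (fun ξ => by rw [Real.rpow_natCast]; exact (hbound ξ).2)
    (by linarith [Nat.le_ceil P]) ha.le haP

/-- Proposition 2.3: if the coefficients `b` of the discrete set `X`
(separated from `0` by `δ`) satisfy `∑_{x ∈ X ∩ B_r} ‖b x‖ ≤ B_X r^P` for `r ≥ δ`,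
and `φ` is a fixed smooth radial nonnegative mollifier supported in `B_1` with `∫ φ = 1`,
then for every `a > 0` with `a ≠ P` there is `W > 0` such that for all `t > 0`,
`∑_{x ∈ X \ {0}} ‖b x * 𝓕φ(t x)‖ / ‖x‖^a ≤ B_X · W · (1 + t^(a-P))`. -/
theorem mollified_coefficient_sum_bound
    (d : ℕ) (X : Set (EuclideanSpace ℝ (Fin d))) (b : EuclideanSpace ℝ (Fin d) → ℂ)
    (hX : ∀ r : ℝ, (X ∩ closedBall 0 r).Finite)
    (δ : ℝ) (hδ : 0 < δ) (hXδ : X ∩ closedBall 0 δ ⊆ {0})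
    (BX P : ℝ) (hBX : 0 < BX) (hP : 0 < P)
    (hgrowth : ∀ r ≥ δ, (∑' x : ↥(X ∩ closedBall 0 r), ‖b x.1‖) ≤ BX * r ^ P)
    (φ : EuclideanSpace ℝ (Fin d) → ℝ)
    (hφ_smooth : ContDiff ℝ (⊤ : ℕ∞) φ) (hφ_nonneg : ∀ x, 0 ≤ φ x)
    (hφ_radial : ∀ x y : EuclideanSpace ℝ (Fin d), ‖x‖ = ‖y‖ → φ x = φ y)
    (hφ_supp : Function.support φ ⊆ closedBall 0 1)
    (hφ_int : ∫ x, φ x = 1)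
    (a : ℝ) (ha : 0 < a) (haP : a ≠ P) :
    ∃ W > 0, ∀ t > (0 : ℝ),
      ∑' x : ↥(X \ {0}),
          ENNReal.ofReal (‖b x.1 * 𝓕 (fun y => (φ y : ℂ)) (t • x.1)‖ / ‖x.1‖ ^ a)
        ≤ ENNReal.ofReal (BX * W * (1 + t ^ (a - P))) :=
  mollified_coefficient_sum_bound_general d X b hX δ hδ hXδ BX P hBX hgrowth φ hφ_smooth hφ_supp a
    ha haP
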